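/- Let A be a periphery component, L an STC-labeling of G, and P a cycle in A with at least one weak edge of L on P. If e_1, e_2 ∈ E(P) with e_2 in strong color class q, then there exists an STC-labeling L' agreeing with L outside E(P) such that e_1 has strong color q under L', or L' has strictly fewer weak edges than L. -/

import Mathlib

open SimpleGraph

noncomputable def weakCount {V : Type*} (G : SimpleGraph V) (ℓ : Sym2 V → ℕ) : ℕ :=
  {e ∈ G.edgeSet | ℓ e = 0}.ncard

def IsSTCLabeling {V : Type*} (G : SimpleGraph V) (c : ℕ) (ℓ : Sym2 V → ℕ) : Prop :=
  (∀ e ∈ G.edgeSet, ℓ e ≤ c) ∧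
  ∀ u v w : V, u ≠ w → G.Adj u v → G.Adj v w → ¬ G.Adj u w →
    ℓ s(u, v) = ℓ s(v, w) → ℓ s(u, v) = 0

/-!
Every vertex of the cycle has at most `c / 2 - 1` edges leaving the cycle, so each cycle edge has a
list of at least two strong colours that clash with no edge leaving the cycle, and any colouring of
the cycle edges from these lists (or weak) in which consecutive edges differ is again an
STC-labeling. If `q` is in the list of `e₁`, colour greedily around the cycle starting with `q` at
`e₁` and make the last edge weak. Otherwise colour every cycle edge strongly, which removes the weak
edge of the cycle. A cycle with lists of size at least two is list-colourable unless it is odd and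
all lists are the same pair `T`; in that case `q ∉ T` forces `q` to leave the cycle at exactly one
end of each cycle edge, which alternates around the cycle and so is impossible when it is odd.
-/

open Function

section CycleColoring

variable {α : Type*} {r : ℕ}

theorem even_of_forall_add_one_iff_not (p : ZMod r → Prop) (h : ∀ i, p (i + 1) ↔ ¬ p i) :
    Even r := by
  have key : ∀ k : ℕ, p k ↔ (p 0 ↔ Even k) := by
    intro k
    induction k with
    | zero => simp
    | succ k ih => rw [Nat.cast_succ, h, ih, Nat.even_add_one]; tauto
  have := key r
  rw [ZMod.natCast_self] at this
  tauto

theorem eq_of_forall_add_one_eq [NeZero r] {f : ZMod r → α} (h : ∀ i, f (i + 1) = f i)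
    (i j : ZMod r) : f i = f j := by
  have key : ∀ k : ℕ, f (j + k) = f j := by
    intro k
    induction k with
    | zero => simp
    | succ k ih => rw [Nat.cast_succ, ← add_assoc, h, ih]
  simpa using key (i - j).val

theorem ZMod.add_one_ne_sub_one (hr : 3 ≤ r) (i : ZMod r) : i + 1 ≠ i - 1 := by
  intro h
  have h2 : ((2 : ℕ) : ZMod r) = 0 := by
    rw [Nat.cast_ofNat]; linear_combination h
  have := Nat.le_of_dvd two_pos ((ZMod.natCast_eq_zero_iff 2 r).mp h2)
  omega

theorem exists_path_coloring (L : ℕ → Finset α) (hL : ∀ k, 1 < (L (k + 1)).card) (a : α)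
    (ha : a ∈ L 0) : ∃ y : ℕ → α, y 0 = a ∧ (∀ k, y k ∈ L k) ∧ ∀ k, y (k + 1) ≠ y k := by
  choose g hg using fun k => Finset.exists_mem_ne (hL k)
  refine ⟨fun k => Nat.rec a g k, rfl, ?_, fun k => (hg k _).2⟩
  rintro (_ | k)
  · exact ha
  · exact (hg k _).1

theorem exists_cycle_coloring_of_path [NeZero r] (s : ZMod r) (y : ℕ → α)
    (hy : ∀ k, k + 1 < r → y (k + 1) ≠ y k) (hwrap : y 0 ≠ y (r - 1)) :
    ∃ x : ZMod r → α, (∀ i, x (i + 1) ≠ x i) ∧ x s = y 0 ∧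
      ∀ i, ∃ k : ℕ, s + k = i ∧ x i = y k := by
  refine ⟨fun i => y (i - s).val, fun i => ?_, by simp,
    fun i => ⟨(i - s).val, by simp, rfl⟩⟩
  set k := (i - s).val
  have hk : k < r := ZMod.val_lt _
  have hsucc : i + 1 - s = ((k + 1 : ℕ) : ZMod r) := by
    rw [Nat.cast_succ, ZMod.natCast_zmod_val]; ring
  simp only [hsucc, ZMod.val_natCast]
  change y ((k + 1) % r) ≠ y k
  rcases Nat.lt_or_ge (k + 1) r with hlt | hge
  · rw [Nat.mod_eq_of_lt hlt]; exact hy k hlt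
  · rw [show k + 1 = r by omega, Nat.mod_self, show k = r - 1 by omega]; exact hwrap

theorem exists_cycle_coloring_with_default [NeZero r] (hr : 2 ≤ r) (L : ZMod r → Finset α)
    (hL : ∀ i, 1 < (L i).card) (z : α) (hz : ∀ i, z ∉ L i) (s : ZMod r) (a : α) (ha : a ∈ L s) :
    ∃ x : ZMod r → α, x s = a ∧ (∀ i, x i = z ∨ x i ∈ L i) ∧ ∀ i, x (i + 1) ≠ x i := by
  obtain ⟨y, hy0, hyL, hyne⟩ :=
    exists_path_coloring (fun k => L (s + k)) (fun k => hL _) a (by simpa using ha)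
  have hyz : ∀ k, y k ≠ z := fun k h => hz _ (h ▸ hyL k)
  obtain ⟨x, hxne, hxs, hx⟩ := exists_cycle_coloring_of_path s
    (fun k => if k = r - 1 then z else y k)
    (fun k hk => by
      by_cases hlast : k + 1 = r - 1
      · simp only [hlast, if_pos, if_neg (show k ≠ r - 1 by omega)]; exact (hyz k).symm
      · simp only [if_neg hlast, if_neg (show k ≠ r - 1 by omega)]; exact hyne k)
    (by simp only [if_neg (show 0 ≠ r - 1 by omega), if_pos]; exact hyz 0)
  refine ⟨x, by simp [hxs, hy0, show 0 ≠ r - 1 by omega], fun i => ?_, hxne⟩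
  obtain ⟨k, rfl, hxk⟩ := hx i
  rw [hxk]
  split_ifs
  exacts [Or.inl rfl, Or.inr (hyL k)]

theorem exists_cycle_coloring_of_one_lt_card_erase [DecidableEq α] [NeZero r] (hr : 2 ≤ r)
    (L : ZMod r → Finset α) (hL : ∀ i, 1 < (L i).card) (s : ZMod r) (a : α) (ha : a ∈ L s)
    (herase : 1 < ((L (s - 1)).erase a).card) :
    ∃ x : ZMod r → α, (∀ i, x i ∈ L i) ∧ ∀ i, x (i + 1) ≠ x i := by
  have hlast : s + ((r - 1 : ℕ) : ZMod r) = s - 1 := by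
    rw [Nat.cast_sub (by omega), ZMod.natCast_self]; ring
  obtain ⟨y, hy0, hyL, hyne⟩ := exists_path_coloring
    (fun k => if k = r - 1 then (L (s + k)).erase a else L (s + k))
    (fun k => by
      split_ifs with hk
      · rwa [hk, hlast]
      · exact hL _)
    a (by simpa [show 0 ≠ r - 1 by omega] using ha)
  have hyL' : ∀ k : ℕ, y k ∈ L (s + k) := fun k => by
    have := hyL k
    split_ifs at this
    exacts [Finset.mem_of_mem_erase this, this]
  obtain ⟨x, hxne, -, hx⟩ := exists_cycle_coloring_of_path s y (fun k _ => hyne k) (by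
    have := hyL (r - 1)
    rw [if_pos rfl] at this
    rw [hy0]
    exact (Finset.ne_of_mem_erase this).symm)
  refine ⟨x, fun i => ?_, hxne⟩
  obtain ⟨k, rfl, hxk⟩ := hx i
  exact hxk ▸ hyL' k

theorem exists_cycle_coloring_of_even [DecidableEq α] [NeZero r] (hr : Even r)
    (L : ZMod r → Finset α) (a b : α) (hab : a ≠ b) (hL : ∀ i, L i = {a, b}) :
    ∃ x : ZMod r → α, (∀ i, x i ∈ L i) ∧ ∀ i, x (i + 1) ≠ x i := by
  have hr0 : r ≠ 0 := NeZero.ne r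
  obtain ⟨x, hxne, -, hx⟩ :=
    exists_cycle_coloring_of_path (0 : ZMod r) (fun k => if Even k then a else b)
    (fun k _ => by by_cases hk : Even k <;> simp [hk, Nat.even_add_one, hab, hab.symm])
    (by
      have : ¬ Even (r - 1) := by
        obtain ⟨m, hm⟩ := hr
        rintro ⟨n, hn⟩
        omega
      simpa [this] using hab)
  refine ⟨x, fun i => ?_, hxne⟩
  obtain ⟨k, -, hxk⟩ := hx i
  rw [hxk, hL]
  split_ifs <;> simp

theorem exists_cycle_list_coloring [DecidableEq α] [NeZero r] (hr : 2 ≤ r) (L : ZMod r → Finset α)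
    (hL : ∀ i, 1 < (L i).card) (hodd : (∀ i, L i = L 0) → (L 0).card = 2 → Even r) :
    ∃ x : ZMod r → α, (∀ i, x i ∈ L i) ∧ ∀ i, x (i + 1) ≠ x i := by
  by_cases hstart : ∃ s, ∃ a ∈ L s, 1 < ((L (s - 1)).erase a).card
  · obtain ⟨s, a, ha, herase⟩ := hstart
    exact exists_cycle_coloring_of_one_lt_card_erase hr L hL s a ha herase
  push Not at hstart
  have hcard : ∀ i, (L i).card ≤ 2 := fun i => by
    obtain ⟨a, ha⟩ := Finset.card_pos.mp (show 0 < (L (i + 1)).card by linarith [hL (i + 1)])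
    have := hstart (i + 1) a ha
    have := Finset.pred_card_le_card_erase (s := L (i + 1 - 1)) (a := a)
    simp only [add_sub_cancel_right] at *
    omega
  have hstep : ∀ i, L (i + 1) = L i := fun i => by
    refine Finset.eq_of_subset_of_card_le (fun a ha => ?_) (by linarith [hcard i, hL (i + 1)])
    by_contra hai
    have := hstart (i + 1) a ha
    rw [add_sub_cancel_right, Finset.erase_eq_of_notMem hai] at this
    exact absurd (hL i) (by omega)
  have hconst : ∀ i, L i = L 0 := fun i => eq_of_forall_add_one_eq hstep i 0
  have hcard0 : (L 0).card = 2 := le_antisymm (hcard 0) (hL 0)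
  obtain ⟨a, b, hab, hL0⟩ := Finset.card_eq_two.mp hcard0
  exact exists_cycle_coloring_of_even (hodd hconst hcard0) L a b hab fun i => (hconst i).trans hL0

end CycleColoring

section STCCycle

variable {V : Type*} (G : SimpleGraph V) (c : ℕ) (ℓ : Sym2 V → ℕ) {r : ℕ} (C : ZMod r → V)

def cycleEdge (i : ZMod r) : Sym2 V := s(C i, C (i + 1))

open Classical in
noncomputable def outerColors (E : Set (Sym2 V)) (v : V) : Finset ℕ :=
  {a ∈ Finset.Icc 1 c | ∃ w, G.Adj v w ∧ s(v, w) ∉ E ∧ ℓ s(v, w) = a}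

noncomputable def availableColors (i : ZMod r) : Finset ℕ :=
  Finset.Icc 1 c \ (outerColors G c ℓ (Set.range (cycleEdge C)) (C i) ∪
    outerColors G c ℓ (Set.range (cycleEdge C)) (C (i + 1)))

variable {G c ℓ C}

open Classical in
theorem mem_outerColors {E : Set (Sym2 V)} {v : V} {a : ℕ} :
    a ∈ outerColors G c ℓ E v ↔ a ∈ Finset.Icc 1 c ∧ ∃ w, G.Adj v w ∧ s(v, w) ∉ E ∧ ℓ s(v, w) = a :=
  Finset.mem_filter

theorem outerColors_subset_Icc (E : Set (Sym2 V)) (v : V) :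
    outerColors G c ℓ E v ⊆ Finset.Icc 1 c :=
  fun _ ha => (mem_outerColors.mp ha).1

theorem cycleEdge_injective (hr : 3 ≤ r) (hC : Injective C) : Injective (cycleEdge C) := by
  intro i j h
  rcases Sym2.eq_iff.mp h with ⟨hij, -⟩ | ⟨hij, hji⟩
  · exact hC hij
  · have hi : j + 1 = i := (hC hij).symm
    have hj : i + 1 = j := hC hji
    exact absurd (hj.trans (eq_sub_of_add_eq hi)) (ZMod.add_one_ne_sub_one hr i)

theorem eq_or_eq_add_one_of_mem_cycleEdge (hC : Injective C) {v : V} {i j : ZMod r}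
    (hi : v ∈ cycleEdge C i) (hj : v ∈ cycleEdge C j) : i = j ∨ i = j + 1 ∨ j = i + 1 := by
  simp only [cycleEdge, Sym2.mem_iff] at hi hj
  rcases hi with rfl | rfl <;> rcases hj with h | h
  · exact Or.inl (hC h)
  · exact Or.inr (Or.inl (hC h))
  · exact Or.inr (Or.inr (hC h).symm)
  · exact Or.inl (add_right_cancel (hC h))

theorem card_outerColors_le [Finite V] (E : Set (Sym2 V)) (v : V) :
    (outerColors G c ℓ E v).card ≤ {w | G.Adj v w ∧ s(v, w) ∉ E}.ncard := by
  rw [← Set.ncard_coe_finset]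
  refine (Set.ncard_le_ncard (fun a ha => ?_) (Set.toFinite _)).trans
    (Set.ncard_image_le (f := fun w => ℓ s(v, w)) (Set.toFinite _))
  obtain ⟨-, w, hvw, hE, rfl⟩ := mem_outerColors.mp ha
  exact ⟨w, ⟨hvw, hE⟩, rfl⟩

theorem card_outerColors_add_two_le [Finite V] (hr : 3 ≤ r) (hC : Injective C)
    (hadj : ∀ i, G.Adj (C i) (C (i + 1))) (i : ZMod r) :
    (outerColors G c ℓ (Set.range (cycleEdge C)) (C i)).card + 2 ≤
      (G.neighborSet (C i)).ncard := by
  set N := {w | G.Adj (C i) w ∧ s(C i, w) ∉ Set.range (cycleEdge C)}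
  have hnext : C (i + 1) ∉ N := fun h => h.2 ⟨i, rfl⟩
  have hprev : C (i - 1) ∉ N := fun h =>
    h.2 ⟨i - 1, by rw [cycleEdge, sub_add_cancel, Sym2.eq_swap]⟩
  have hne : C (i + 1) ≠ C (i - 1) := hC.ne (ZMod.add_one_ne_sub_one hr i)
  have hsub : insert (C (i + 1)) (insert (C (i - 1)) N) ⊆ G.neighborSet (C i) := by
    rintro w (rfl | rfl | hw)
    · exact hadj i
    · simpa using (hadj (i - 1)).symm
    · exact hw.1
  calc (outerColors G c ℓ (Set.range (cycleEdge C)) (C i)).card + 2 ≤ N.ncard + 2 := by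
        gcongr; exact card_outerColors_le _ _
    _ = (insert (C (i + 1)) (insert (C (i - 1)) N)).ncard := by
        rw [Set.ncard_insert_of_notMem (by simp [hne, hnext]), Set.ncard_insert_of_notMem hprev]
    _ ≤ (G.neighborSet (C i)).ncard := Set.ncard_le_ncard hsub

section Degree

variable [Finite V] (hr : 3 ≤ r) (hC : Injective C) (hadj : ∀ i, G.Adj (C i) (C (i + 1)))
  (hdeg : ∀ i, (G.neighborSet (C i)).ncard ≤ c / 2 + 1)
include hr hC hadj hdeg

theorem card_outerColors_add_one_le (i : ZMod r) :
    (outerColors G c ℓ (Set.range (cycleEdge C)) (C i)).card + 1 ≤ c / 2 := by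
  have := card_outerColors_add_two_le (c := c) (ℓ := ℓ) hr hC hadj i
  linarith [hdeg i]

theorem card_inter_outerColors_add_two_le (i : ZMod r) :
    (outerColors G c ℓ (Set.range (cycleEdge C)) (C i) ∩
      outerColors G c ℓ (Set.range (cycleEdge C)) (C (i + 1))).card + 2 ≤
        (availableColors G c ℓ C i).card := by
  have hsub : outerColors G c ℓ (Set.range (cycleEdge C)) (C i) ∪
      outerColors G c ℓ (Set.range (cycleEdge C)) (C (i + 1)) ⊆ Finset.Icc 1 c :=
    Finset.union_subset (outerColors_subset_Icc _ _) (outerColors_subset_Icc _ _)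
  have hunion := Finset.card_union_add_card_inter
    (outerColors G c ℓ (Set.range (cycleEdge C)) (C i))
    (outerColors G c ℓ (Set.range (cycleEdge C)) (C (i + 1)))
  have hle := Finset.card_le_card hsub
  rw [Nat.card_Icc, add_tsub_cancel_right] at hle
  rw [availableColors, Finset.card_sdiff_of_subset hsub, Nat.card_Icc, add_tsub_cancel_right]
  have := card_outerColors_add_one_le (ℓ := ℓ) hr hC hadj hdeg i
  have := card_outerColors_add_one_le (ℓ := ℓ) hr hC hadj hdeg (i + 1)
  omega

theorem one_lt_card_availableColors (i : ZMod r) : 1 < (availableColors G c ℓ C i).card := by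
  have := card_inter_outerColors_add_two_le (ℓ := ℓ) hr hC hadj hdeg i
  omega

theorem even_of_availableColors_eq {T : Finset ℕ} (hT : ∀ i, availableColors G c ℓ C i = T)
    (hcard : T.card = 2) {q : ℕ} (hq : q ∈ Finset.Icc 1 c) (hqT : q ∉ T) : Even r := by
  refine even_of_forall_add_one_iff_not
    (fun i => q ∈ outerColors G c ℓ (Set.range (cycleEdge C)) (C i)) fun i => ?_
  have hcap := card_inter_outerColors_add_two_le (ℓ := ℓ) hr hC hadj hdeg i
  rw [hT i, hcard, add_le_iff_nonpos_left, Nat.le_zero, Finset.card_eq_zero] at hcap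
  have hcup : q ∈ outerColors G c ℓ (Set.range (cycleEdge C)) (C i) ∪
      outerColors G c ℓ (Set.range (cycleEdge C)) (C (i + 1)) := by
    by_contra h
    exact hqT (hT i ▸ Finset.mem_sdiff.mpr ⟨hq, h⟩)
  constructor
  · intro h₁ h₀
    simpa [hcap] using Finset.mem_inter.mpr ⟨h₀, h₁⟩
  · exact (Finset.mem_union.mp hcup).resolve_left

end Degree

theorem zero_notMem_availableColors (i : ZMod r) : 0 ∉ availableColors G c ℓ C i := fun h => by
  simpa using (Finset.mem_sdiff.mp h).1

theorem eq_zero_of_outer_edge_eq {x : ZMod r → ℕ}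
    (hx : ∀ i, x i = 0 ∨ x i ∈ availableColors G c ℓ C i)
    {i : ZMod r} {v w : V} (hv : v ∈ cycleEdge C i) (hvw : G.Adj v w)
    (hE : s(v, w) ∉ Set.range (cycleEdge C)) (heq : ℓ s(v, w) = x i) : x i = 0 := by
  refine (hx i).resolve_right fun hmem => ?_
  obtain ⟨hIcc, hnot⟩ := Finset.mem_sdiff.mp hmem
  have hout : x i ∈ outerColors G c ℓ (Set.range (cycleEdge C)) v :=
    mem_outerColors.mpr ⟨hIcc, w, hvw, hE, heq⟩
  rcases Sym2.mem_iff.mp hv with rfl | rfl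
  exacts [hnot (Finset.mem_union_left _ hout), hnot (Finset.mem_union_right _ hout)]

theorem isSTCLabeling_extend_cycleEdge (hstc : IsSTCLabeling G c ℓ) (hr : 3 ≤ r) (hC : Injective C)
    {x : ZMod r → ℕ} (hx : ∀ i, x i = 0 ∨ x i ∈ availableColors G c ℓ C i)
    (hprop : ∀ i, x (i + 1) ≠ x i) : IsSTCLabeling G c (extend (cycleEdge C) x ℓ) := by
  have hinj := cycleEdge_injective hr hC
  refine ⟨fun e he => ?_, fun u v w huw huv hvw _ heq => ?_⟩
  · by_cases h : ∃ i, cycleEdge C i = e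
    · obtain ⟨i, rfl⟩ := h
      rw [hinj.extend_apply]
      rcases hx i with h0 | hmem
      · omega
      · exact (Finset.mem_Icc.mp (Finset.mem_sdiff.mp hmem).1).2
    · rw [extend_apply' _ _ _ h]
      exact hstc.1 e he
  by_cases h₁ : ∃ i, cycleEdge C i = s(u, v) <;> by_cases h₂ : ∃ j, cycleEdge C j = s(v, w)
  · obtain ⟨i, hi⟩ := h₁
    obtain ⟨j, hj⟩ := h₂
    rw [← hi, ← hj, hinj.extend_apply, hinj.extend_apply] at heq
    rcases eq_or_eq_add_one_of_mem_cycleEdge hC (hi ▸ Sym2.mem_mk_right u v : v ∈ cycleEdge C i)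
      (hj ▸ Sym2.mem_mk_left v w) with rfl | rfl | rfl
    · rw [hi] at hj
      rcases Sym2.eq_iff.mp hj with ⟨h, -⟩ | ⟨h, -⟩
      exacts [(G.ne_of_adj huv h).elim, (huw h).elim]
    · exact absurd heq (hprop j)
    · exact absurd heq.symm (hprop i)
  · obtain ⟨i, hi⟩ := h₁
    rw [← hi, hinj.extend_apply, extend_apply' _ _ _ h₂] at heq
    rw [← hi, hinj.extend_apply]
    exact eq_zero_of_outer_edge_eq hx (hi ▸ Sym2.mem_mk_right u v) hvw (fun h => h₂ h) heq.symm
  · obtain ⟨j, hj⟩ := h₂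
    rw [← hj, hinj.extend_apply, extend_apply' _ _ _ h₁] at heq
    rw [extend_apply' _ _ _ h₁, heq]
    refine eq_zero_of_outer_edge_eq hx (hj ▸ Sym2.mem_mk_left v w) huv.symm
      (by rwa [Sym2.eq_swap]) (by rw [Sym2.eq_swap, heq])
  · rw [extend_apply' _ _ _ h₁, extend_apply' _ _ _ h₂] at heq
    rw [extend_apply' _ _ _ h₁]
    exact hstc.2 u v w huw huv hvw ‹_› heq

end STCCycle

theorem weakCount_lt_of_ne_zero_on {V : Type*} [Finite V] (G : SimpleGraph V)
    {ℓ ℓ' : Sym2 V → ℕ} {E : Set (Sym2 V)} (hE : E ⊆ G.edgeSet) (hout : ∀ e ∉ E, ℓ' e = ℓ e)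
    (hstrong : ∀ e ∈ E, ℓ' e ≠ 0) (hweak : ∃ e ∈ E, ℓ e = 0) :
    weakCount G ℓ' < weakCount G ℓ := by
  obtain ⟨e₀, he₀, hw⟩ := hweak
  have hsub : {e ∈ G.edgeSet | ℓ' e = 0} ⊆ {e ∈ G.edgeSet | ℓ e = 0} := by
    rintro e ⟨he, h0⟩
    by_cases heE : e ∈ E
    · exact absurd h0 (hstrong e heE)
    · exact ⟨he, hout e heE ▸ h0⟩
  exact Set.ncard_lt_ncard ((Set.ssubset_iff_of_subset hsub).mpr
    ⟨e₀, ⟨hE he₀, hw⟩, fun h => hstrong e₀ he₀ h.2⟩) (Set.toFinite _)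

theorem ZMod.val_add_one_eq_mod {r : ℕ} [NeZero r] (hr : r ≠ 1) (i : ZMod r) :
    (i + 1).val = (i.val + 1) % r := by
  rw [ZMod.val_add, ZMod.val_one'' hr]

theorem range_cycleEdge_comp_val {V : Type*} {r : ℕ} [NeZero r] (hr : r ≠ 1) (P : ℕ → V) :
    Set.range (cycleEdge fun i : ZMod r => P i.val) =
      {e | ∃ i < r, e = s(P i, P ((i + 1) % r))} := by
  ext e
  constructor
  · rintro ⟨i, rfl⟩
    exact ⟨i.val, i.val_lt, by simp [cycleEdge, ZMod.val_add_one_eq_mod hr]⟩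
  · rintro ⟨i, hi, rfl⟩
    exact ⟨i, by simp [cycleEdge, ZMod.val_add_one_eq_mod hr, ZMod.val_cast_of_lt hi]⟩

theorem move_strong_color_in_cycle_general {V : Type*} [Fintype V]
    (G : SimpleGraph V) (c : ℕ)
    (A : Set V) (hdeg : ∀ a ∈ A, (G.neighborSet a).ncard ≤ c / 2 + 1)
    (ℓ : Sym2 V → ℕ) (hstc : IsSTCLabeling G c ℓ)
    (r : ℕ) (hr : 3 ≤ r) (P : ℕ → V)
    (hadj : ∀ i < r, G.Adj (P i) (P ((i + 1) % r)))
    (hA : ∀ i < r, P i ∈ A)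
    (hinj : ∀ i < r, ∀ j < r, P i = P j → i = j)
    (EP : Set (Sym2 V)) (hEP : EP = {e | ∃ i < r, e = s(P i, P ((i + 1) % r))})
    (hweak : ∃ e ∈ EP, ℓ e = 0)
    (e₁ : Sym2 V) (he₁ : e₁ ∈ EP)
    (q : ℕ) (hq : 1 ≤ q ∧ q ≤ c) :
    ∃ ℓ' : Sym2 V → ℕ, IsSTCLabeling G c ℓ' ∧
      (∀ e : Sym2 V, e ∉ EP → ℓ' e = ℓ e) ∧
      (ℓ' e₁ = q ∨ weakCount G ℓ' < weakCount G ℓ) := by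
  have : NeZero r := ⟨by omega⟩
  set C : ZMod r → V := fun i => P i.val
  have hCadj : ∀ i, G.Adj (C i) (C (i + 1)) := fun i => by
    simpa [C, ZMod.val_add_one_eq_mod (show r ≠ 1 by omega)] using hadj _ i.val_lt
  have hCinj : Injective C := fun i j h => ZMod.val_injective r (hinj _ i.val_lt _ j.val_lt h)
  obtain rfl : EP = Set.range (cycleEdge C) :=
    hEP.trans (range_cycleEdge_comp_val (by omega) P).symm
  obtain ⟨i₁, rfl⟩ := he₁
  have hdegC : ∀ i, (G.neighborSet (C i)).ncard ≤ c / 2 + 1 := fun i => hdeg _ (hA _ i.val_lt)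
  have hL := one_lt_card_availableColors (ℓ := ℓ) hr hCinj hCadj hdegC
  have hout : ∀ x : ZMod r → ℕ, ∀ e ∉ Set.range (cycleEdge C), extend (cycleEdge C) x ℓ e = ℓ e :=
    fun x e he => extend_apply' _ _ _ he
  by_cases hqL : q ∈ availableColors G c ℓ C i₁
  · obtain ⟨x, hxq, hx, hprop⟩ := exists_cycle_coloring_with_default (by omega) _ hL 0
      zero_notMem_availableColors i₁ q hqL
    refine ⟨_, isSTCLabeling_extend_cycleEdge hstc hr hCinj hx hprop, hout x, Or.inl ?_⟩
    rw [(cycleEdge_injective hr hCinj).extend_apply, hxq]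
  · obtain ⟨x, hx, hprop⟩ := exists_cycle_list_coloring (by omega) _ hL fun hT hcard =>
      even_of_availableColors_eq hr hCinj hCadj hdegC hT hcard (Finset.mem_Icc.mpr hq) (hT i₁ ▸ hqL)
    refine ⟨_, isSTCLabeling_extend_cycleEdge hstc hr hCinj (fun i => Or.inr (hx i)) hprop, hout x,
      Or.inr (weakCount_lt_of_ne_zero_on G (Set.range_subset_iff.mpr hCadj) (hout x) ?_ hweak)⟩
    rintro _ ⟨i, rfl⟩ h0
    rw [(cycleEdge_injective hr hCinj).extend_apply] at h0
    exact zero_notMem_availableColors i (h0 ▸ hx i)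

/-- Moving a strong color around a cycle inside a periphery component that
carries a weak edge: if `e₂` on the cycle has strong color `q`, then there is
a labeling agreeing with `L` outside the cycle in which `e₁` has strong color
`q`, or one with strictly fewer weak edges. -/
theorem move_strong_color_in_cycle {V : Type*} [Fintype V] [DecidableEq V]
    (G : SimpleGraph V) (c : ℕ)
    (A : Set V) (hdeg : ∀ a ∈ A, (G.neighborSet a).ncard ≤ c / 2 + 1)
    (ℓ : Sym2 V → ℕ) (hstc : IsSTCLabeling G c ℓ)
    (r : ℕ) (hr : 3 ≤ r) (P : ℕ → V)
    (hadj : ∀ i < r, G.Adj (P i) (P ((i + 1) % r)))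
    (hA : ∀ i < r, P i ∈ A)
    (hinj : ∀ i < r, ∀ j < r, P i = P j → i = j)
    (EP : Set (Sym2 V)) (hEP : EP = {e | ∃ i < r, e = s(P i, P ((i + 1) % r))})
    (hweak : ∃ e ∈ EP, ℓ e = 0)
    (e₁ e₂ : Sym2 V) (he₁ : e₁ ∈ EP) (he₂ : e₂ ∈ EP)
    (q : ℕ) (hq : 1 ≤ q ∧ q ≤ c) (he₂q : ℓ e₂ = q) :
    ∃ ℓ' : Sym2 V → ℕ, IsSTCLabeling G c ℓ' ∧
      (∀ e : Sym2 V, e ∉ EP → ℓ' e = ℓ e) ∧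
      (ℓ' e₁ = q ∨ weakCount G ℓ' < weakCount G ℓ) :=
  move_strong_color_in_cycle_general G c A hdeg ℓ hstc r hr P hadj hA hinj EP hEP hweak e₁ he₁ q hq
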